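/- Let G be a graph with two distinct vertices s, t and two distinct vertices s', t', and let k be a nonnegative integer. Let H be the graph obtained from G by adding two new vertices u and v, where u is adjacent exactly to s and t, and v is adjacent exactly to s' and t'. Then G contains two vertex-disjoint paths between {s,t} and {s',t'} (each path having one endpoint in {s,t} and the other endpoint in {s',t'}, and the two paths together covering all four endpoints) of total length at least k if and only if H contains a cycle of length at least k + 4 passing through both u and v. -/

import Mathlib

open SimpleGraph

/-- The minimum degree of a finite simple graph (0 for the empty graph). -/
noncomputable def minDeg {W : Type*} [Finite W] (H : SimpleGraph W) : ℕ :=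
  letI := Fintype.ofFinite W
  letI : DecidableRel H.Adj := Classical.decRel _
  H.minDegree

/-- `delMinDeg G B` is `δ(G − B)`, the minimum degree of the subgraph of `G`
induced on the complement of `B`. -/
noncomputable def delMinDeg {V : Type*} [Finite V] (G : SimpleGraph V) (B : Set V) : ℕ :=
  minDeg (G.induce Bᶜ)

/-- A graph is 2-connected if it is connected, has at least three vertices,
and stays connected after removal of any single vertex. -/
def IsTwoConnected {W : Type*} (H : SimpleGraph W) : Prop :=
  H.Connected ∧ 3 ≤ Nat.card W ∧ ∀ v : W, (H.induce {w | w ≠ v}).Connected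

/-- The set of vertices of a walk. -/
def suppSet {V : Type*} {G : SimpleGraph V} {u v : V} (p : G.Walk u v) : Set V :=
  {x | x ∈ p.support}

/-- `IsCompOf G A H` : `H` is the vertex set of a connected component of the subgraph
of `G` induced on `A`, i.e. a maximal nonempty connected subset of `A`. -/
def IsCompOf {V : Type*} (G : SimpleGraph V) (A H : Set V) : Prop :=
  H ⊆ A ∧ H.Nonempty ∧ (G.induce H).Connected ∧
    ∀ H' : Set V, H ⊆ H' → H' ⊆ A → (G.induce H').Connected → H' = H

/-- `CutVertex G H v` : `v` is a cut-vertex of the subgraph of `G` induced on `H`. -/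
def CutVertex {V : Type*} (G : SimpleGraph V) (H : Set V) (v : V) : Prop :=
  v ∈ H ∧ ¬ (G.induce (H \ {v})).Connected

/-- `IsBlock G H B` : `B` is a block (inclusion-maximal connected induced subgraph
without cut-vertices) of the subgraph of `G` induced on `H`. -/
def IsBlock {V : Type*} (G : SimpleGraph V) (H B : Set V) : Prop :=
  B ⊆ H ∧ B.Nonempty ∧ (G.induce B).Connected ∧ (∀ v, ¬ CutVertex G B v) ∧
    ∀ B' : Set V, B ⊆ B' → B' ⊆ H → (G.induce B').Connected →
      (∀ v, ¬ CutVertex G B' v) → B' = B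

/-- `IsLeafBlock G H B` : `B` is a leaf-block of the subgraph of `G` induced on `H`;
equivalently, a block containing at most one cut-vertex of `H`. -/
def IsLeafBlock {V : Type*} (G : SimpleGraph V) (H B : Set V) : Prop :=
  IsBlock G H B ∧
    ∀ c₁ c₂, c₁ ∈ B → c₂ ∈ B → CutVertex G H c₁ → CutVertex G H c₂ → c₁ = c₂

/-- The maximum size of a matching in `G` between `A` and `B` is exactly one. -/
def MaxMatchingOne {V : Type*} (G : SimpleGraph V) (A B : Set V) : Prop :=
  (∃ a ∈ A, ∃ b ∈ B, G.Adj a b) ∧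
  ∀ a₁ ∈ A, ∀ b₁ ∈ B, ∀ a₂ ∈ A, ∀ b₂ ∈ B,
    G.Adj a₁ b₁ → G.Adj a₂ b₂ → a₁ = a₂ ∨ b₁ = b₂

/-- Type (R1)/(D1) component. -/
def TypeR1 {V : Type*} (G : SimpleGraph V) (H Q₁ Q₂ : Set V) : Prop :=
  IsTwoConnected (G.induce H) ∧ MaxMatchingOne G H Q₁ ∧ MaxMatchingOne G H Q₂

/-- Type (R2)/(D2) component (type (R3)/(D3) is obtained by swapping `Q₁` and `Q₂`). -/
def TypeR2 {V : Type*} (G : SimpleGraph V) (H Q₁ Q₂ : Set V) : Prop :=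
  ¬ IsTwoConnected (G.induce H) ∧
  (∃! x, x ∈ Q₁ ∧ ∃ y ∈ H, G.Adj x y) ∧
  ∀ B : Set V, IsLeafBlock G H B →
    ∀ v ∈ B, ¬ CutVertex G H v → ∀ w ∈ Q₂, ¬ G.Adj v w

/-- A component `H` has at least 3 vertices and is of one of the types (R1), (R2), (R3). -/
def GoodComp {V : Type*} (G : SimpleGraph V) (Q₁ Q₂ H : Set V) : Prop :=
  3 ≤ H.ncard ∧ (TypeR1 G H Q₁ Q₂ ∨ TypeR2 G H Q₁ Q₂ ∨ TypeR2 G H Q₂ Q₁)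

/-- The two disjoint paths `P₁`, `P₂` induce an Erdős–Gallai decomposition for the
`(s,t)`-path `P₁ ++ Pm ++ P₂` in `G`. -/
def InducesEGDecomp {V : Type*} [Finite V] (G : SimpleGraph V) {s t a b : V}
    (P₁ : G.Walk s a) (Pm : G.Walk a b) (P₂ : G.Walk b t) : Prop :=
  P₁.IsPath ∧ P₂.IsPath ∧ Disjoint (suppSet P₁) (suppSet P₂) ∧
  (P₁.append (Pm.append P₂)).IsPath ∧
  delMinDeg G {s, t} ≤ Pm.length ∧
  (∃ H₁ H₂ : Set V, H₁ ≠ H₂ ∧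
      IsCompOf G (suppSet P₁ ∪ suppSet P₂)ᶜ H₁ ∧
      IsCompOf G (suppSet P₁ ∪ suppSet P₂)ᶜ H₂) ∧
  ∀ H : Set V, IsCompOf G (suppSet P₁ ∪ suppSet P₂)ᶜ H →
    GoodComp G (suppSet P₁) (suppSet P₂) H

/-- `M` is an Erdős–Gallai component (resp. a Dirac component) of a decomposition whose
deleted paths have vertex sets `Q₁` and `Q₂`: either a component of type (R1),
or a leaf-block of a component of type (R2) or (R3). -/
def IsEGComponent {V : Type*} (G : SimpleGraph V) (Q₁ Q₂ M : Set V) : Prop :=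
  (IsCompOf G (Q₁ ∪ Q₂)ᶜ M ∧ TypeR1 G M Q₁ Q₂) ∨
  (∃ H : Set V, IsCompOf G (Q₁ ∪ Q₂)ᶜ H ∧ (TypeR2 G H Q₁ Q₂ ∨ TypeR2 G H Q₂ Q₁) ∧
      IsLeafBlock G H M)

/-- A walk enters a vertex set `M` if it traverses an edge with both endpoints in `M`. -/
def WalkEnters {V : Type*} {G : SimpleGraph V} {u v : V} (P : G.Walk u v) (M : Set V) : Prop :=
  ∃ x y : V, x ∈ M ∧ y ∈ M ∧ s(x, y) ∈ P.edges

/-- The vertices of `S` visited by the walk `P` appear consecutively on `P`. -/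
def ConsecutiveOn {V : Type*} {G : SimpleGraph V} {u v : V} (P : G.Walk u v) (S : Set V) : Prop :=
  ∃ l₁ l₂ l₃ : List V, P.support = l₁ ++ l₂ ++ l₃ ∧
    ∀ x : V, x ∈ l₂ ↔ (x ∈ S ∧ x ∈ P.support)

/-- The two disjoint paths `P₁`, `P₂` induce a Dirac decomposition for the cycle
`P₁ ++ Pm ++ P₂ ++ Pm'` in `G`. -/
def InducesDiracDecomp {V : Type*} [Finite V] (G : SimpleGraph V) {s a b c : V}
    (P₁ : G.Walk s a) (Pm : G.Walk a b) (P₂ : G.Walk b c) (Pm' : G.Walk c s) : Prop :=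
  (P₁.append (Pm.append (P₂.append Pm'))).IsCycle ∧
  2 * minDeg G ≤ (P₁.append (Pm.append (P₂.append Pm'))).length ∧
  P₁.IsPath ∧ P₂.IsPath ∧ Disjoint (suppSet P₁) (suppSet P₂) ∧
  minDeg G - 2 ≤ Pm.length ∧ minDeg G - 2 ≤ Pm'.length ∧
  (∀ H : Set V, IsCompOf G (suppSet P₁ ∪ suppSet P₂)ᶜ H →
      GoodComp G (suppSet P₁) (suppSet P₂) H) ∧
  IsCompOf G (suppSet P₁ ∪ suppSet P₂)ᶜ (suppSet Pm \ {a, b}) ∧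
  IsCompOf G (suppSet P₁ ∪ suppSet P₂)ᶜ (suppSet Pm' \ {c, s})

/-- The graph obtained from `G` by adding two new vertices `u = Sum.inr false` and
`v = Sum.inr true`, where `u` is adjacent exactly to `s` and `t`, and `v` is adjacent
exactly to `s'` and `t'`. -/
def addTwoApexes {V : Type*} (G : SimpleGraph V) (s t s' t' : V) :
    SimpleGraph (V ⊕ Bool) :=
  SimpleGraph.fromRel (fun x y =>
    (∃ a b : V, x = Sum.inl a ∧ y = Sum.inl b ∧ G.Adj a b) ∨
    (x = Sum.inr false ∧ (y = Sum.inl s ∨ y = Sum.inl t)) ∨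
    (x = Sum.inr true ∧ (y = Sum.inl s' ∨ y = Sum.inl t')))

/-!
Read from the apex `u`, a cycle through both apexes is the union of two internally disjoint
`u`–`v` paths. Since `u` and `v` have no neighbours besides `s, t` and `s', t'` respectively,
every `u`–`v` path of the extended graph is `u`, then a path of `G` from `{s, t}` to `{s', t'}`,
then `v`, and is two edges longer than that path. Hence cycles of length `ℓ` through `u` and `v`
correspond to pairs of vertex-disjoint `{s, t}`–`{s', t'}` paths of `G` of total length `ℓ - 4`;
disjointness forces the two paths to use distinct endpoints, so together they cover all four.
-/

lemma Set.pair_eq_of_eq_or_eq_of_ne {α : Type*} {a b x y : α} (ha : a = x ∨ a = y)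
    (hb : b = x ∨ b = y) (hab : a ≠ b) : ({a, b} : Set α) = {x, y} := by
  rcases ha with rfl | rfl <;> rcases hb with rfl | rfl <;> simp_all [Set.pair_comm]

lemma disjoint_suppSet_iff {V : Type*} {G : SimpleGraph V} {x a y b : V} (p : G.Walk x a)
    (q : G.Walk y b) : Disjoint (suppSet p) (suppSet q) ↔ p.support.Disjoint q.support :=
  Set.disjoint_left.trans List.disjoint_left.symm

namespace addTwoApexes

open Sum Walk

variable {V : Type*} {G : SimpleGraph V} {s t s' t' : V}

@[simp]
lemma adj_inl_inl {a b : V} :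
    (addTwoApexes G s t s' t').Adj (inl a) (inl b) ↔ G.Adj a b := by
  simp only [addTwoApexes, fromRel_adj, ne_eq, inl.injEq, exists_and_left, exists_eq_left',
    reduceCtorEq, false_and, or_self, or_false]
  exact ⟨fun h => h.2.elim id .symm, fun h => ⟨h.ne, .inl h⟩⟩

@[simp]
lemma adj_inr_false_inl {x : V} :
    (addTwoApexes G s t s' t').Adj (inr false) (inl x) ↔ x = s ∨ x = t := by
  simp [addTwoApexes]

@[simp]
lemma adj_inl_inr_true {x : V} :
    (addTwoApexes G s t s' t').Adj (inl x) (inr true) ↔ x = s' ∨ x = t' := by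
  simp [addTwoApexes]

lemma not_adj_inr_inr (i j : Bool) : ¬ (addTwoApexes G s t s' t').Adj (inr i) (inr j) := by
  simp [addTwoApexes]

@[simps]
def inlEmbedding : G ↪g addTwoApexes G s t s' t' where
  toFun := inl
  inj' := inl_injective
  map_rel_iff' := adj_inl_inl

/-- The ascriptions keep the term type-correct at reducible transparency, where
`inlEmbedding.toHom x` and `inl x` differ; without them `simp` cannot rewrite it. -/
def apexWalk {x a : V} (p : G.Walk x a) (hx : x = s ∨ x = t) (ha : a = s' ∨ a = t') :
    (addTwoApexes G s t s' t').Walk (inr false) (inr true) :=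
  .cons (show (addTwoApexes G s t s' t').Adj (inr false) (inlEmbedding.toHom x) from
      adj_inr_false_inl.2 hx)
    ((p.map inlEmbedding.toHom).concat
      (show (addTwoApexes G s t s' t').Adj (inlEmbedding.toHom a) (inr true) from
        adj_inl_inr_true.2 ha))

section apexWalk

variable {x a y b : V} (p : G.Walk x a) (hx : x = s ∨ x = t) (ha : a = s' ∨ a = t')
  (q : G.Walk y b) (hy : y = s ∨ y = t) (hb : b = s' ∨ b = t')

lemma support_apexWalk :
    (apexWalk p hx ha).support = inr false :: (p.support.map inl ++ [inr true]) := by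
  simp [apexWalk, support_concat]

lemma length_apexWalk : (apexWalk p hx ha).length = p.length + 2 := by
  simp [apexWalk]

lemma isPath_apexWalk_iff : (apexWalk p hx ha).IsPath ↔ p.IsPath := by
  simp [isPath_def, support_apexWalk, List.nodup_append, List.nodup_map_iff inl_injective]

lemma disjoint_support_tail_apexWalk_iff :
    (apexWalk p hx ha).support.tail.Disjoint (apexWalk q hy hb).reverse.support.tail ↔
      p.support.Disjoint q.support := by
  simpa [support_reverse, support_apexWalk] using List.Disjoint.map_iff inl_injective

lemma length_apexWalk_append_reverse :
    ((apexWalk p hx ha).append (apexWalk q hy hb).reverse).length = p.length + q.length + 4 := by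
  simp only [length_append, length_reverse, length_apexWalk]
  ring

lemma isCycle_apexWalk_append_reverse_iff :
    ((apexWalk p hx ha).append (apexWalk q hy hb).reverse).IsCycle ↔
      p.IsPath ∧ q.IsPath ∧ p.support.Disjoint q.support := by
  rw [← isPath_apexWalk_iff p hx ha, ← isPath_apexWalk_iff q hy hb,
    ← isPath_reverse_iff (apexWalk q hy hb), ← disjoint_support_tail_apexWalk_iff p hx ha q hy hb]
  constructor
  · intro hc
    have hnd := hc.support_nodup
    rw [tail_support_append, List.nodup_append'] at hnd
    exact ⟨hc.isPath_of_append_left (by simp [apexWalk]),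
      hc.isPath_of_append_right (by simp [apexWalk]), hnd.2.2⟩
  · rintro ⟨hp, hq, hpq⟩
    exact hp.isCycle_append hq hpq (by simp [length_apexWalk])

end apexWalk

lemma exists_eq_concat_map_inl :
    ∀ {x : V} (W : (addTwoApexes G s t s' t').Walk (inl x) (inr true)),
      W.IsPath → inr false ∉ W.support →
        ∃ (a : V) (p : G.Walk x a) (ha : a = s' ∨ a = t'),
          W = (p.map inlEmbedding.toHom).concat (adj_inl_inr_true.2 ha)
  | _, .cons (v := inl _) h W, hW, hu => by
    obtain ⟨a, p, ha, rfl⟩ := exists_eq_concat_map_inl W hW.of_cons (by simp_all)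
    exact ⟨a, .cons (adj_inl_inl.1 h) p, ha, rfl⟩
  | _, .cons (v := inr true) h W, hW, _ => by
    obtain rfl := (isPath_iff_nil.1 hW.of_cons).eq_nil
    exact ⟨_, .nil, adj_inl_inr_true.1 h, rfl⟩
  | _, .cons (v := inr false) _ _, _, hu => by simp at hu

lemma exists_eq_apexWalk :
    ∀ (P : (addTwoApexes G s t s' t').Walk (inr false) (inr true)), P.IsPath →
      ∃ (x a : V) (p : G.Walk x a) (hx : x = s ∨ x = t) (ha : a = s' ∨ a = t'),
        P = apexWalk p hx ha
  | .cons (v := inl x) h W, hP => by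
    obtain ⟨hW, hu⟩ := (cons_isPath_iff _ _).1 hP
    obtain ⟨a, p, ha, rfl⟩ := exists_eq_concat_map_inl W hW hu
    exact ⟨x, a, p, adj_inr_false_inl.1 h, ha, rfl⟩
  | .cons (v := inr _) h _, _ => (not_adj_inr_inr _ _ h).elim

lemma exists_rotate_eq_apexWalk_append_reverse [DecidableEq V] {w : V ⊕ Bool}
    {C : (addTwoApexes G s t s' t').Walk w w} (hC : C.IsCycle) (hu : inr false ∈ C.support)
    (hv : inr true ∈ C.support) :
    ∃ (x a y b : V) (p : G.Walk x a) (q : G.Walk y b) (hx : x = s ∨ x = t)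
      (ha : a = s' ∨ a = t') (hy : y = s ∨ y = t) (hb : b = s' ∨ b = t'),
        C.rotate _ hu = (apexWalk p hx ha).append (apexWalk q hy hb).reverse := by
  set R := C.rotate _ hu
  have hR : R.IsCycle := hC.rotate hu
  have hvR : inr true ∈ R.support := (mem_support_rotate_iff _ _ _).2 hv
  have hspec := R.take_spec hvR
  have hdrop : (R.dropUntil _ hvR).IsPath :=
    (hspec ▸ hR).isPath_of_append_right (not_nil_of_ne (by simp))
  obtain ⟨x, a, p, hx, ha, hp⟩ := exists_eq_apexWalk _ (hR.isPath_takeUntil hvR)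
  obtain ⟨y, b, q, hy, hb, hq⟩ := exists_eq_apexWalk _ ((isPath_reverse_iff _).2 hdrop)
  exact ⟨x, a, y, b, p, q, hx, ha, hy, hb, by rw [← hspec, hp, ← hq, reverse_reverse]⟩

end addTwoApexes

open addTwoApexes Walk

theorem two_disjoint_paths_iff_apex_cycle_general {V : Type*} (G : SimpleGraph V)
    (s t s' t' : V) (k : ℕ) :
    (∃ a b : V, ({a, b} : Set V) = {s', t'} ∧
        ∃ (p : G.Walk s a) (q : G.Walk t b), p.IsPath ∧ q.IsPath ∧
          Disjoint (suppSet p) (suppSet q) ∧ k ≤ p.length + q.length) ↔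
    (∃ (w : V ⊕ Bool) (C : (addTwoApexes G s t s' t').Walk w w), C.IsCycle ∧
        Sum.inr false ∈ C.support ∧ Sum.inr true ∈ C.support ∧ k + 4 ≤ C.length) := by
  classical
  constructor
  · rintro ⟨a, b, hab, p, q, hp, hq, hpq, hk⟩
    have ha : a = s' ∨ a = t' := by simpa using hab.subset (Set.mem_insert a {b})
    have hb : b = s' ∨ b = t' := by simpa using hab.subset (Set.mem_insert_of_mem a rfl)
    refine ⟨_, (apexWalk p (.inl rfl) ha).append (apexWalk q (.inr rfl) hb).reverse,
      (isCycle_apexWalk_append_reverse_iff ..).2 ⟨hp, hq, (disjoint_suppSet_iff p q).1 hpq⟩,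
      by simp, by simp [support_apexWalk], by rw [length_apexWalk_append_reverse]; omega⟩
  · rintro ⟨w, C, hC, hu, hv, hk⟩
    obtain ⟨x, a, y, b, p, q, hx, ha, hy, hb, hrot⟩ :=
      exists_rotate_eq_apexWalk_append_reverse hC hu hv
    obtain ⟨hp, hq, hpq⟩ := (isCycle_apexWalk_append_reverse_iff ..).1 (hrot ▸ hC.rotate hu)
    have hlen : C.length = p.length + q.length + 4 := by
      rw [← length_rotate C _ hu, hrot, length_apexWalk_append_reverse]
    have hxy : x ≠ y := fun h => hpq p.start_mem_support (h ▸ q.start_mem_support)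
    have hab : a ≠ b := fun h => hpq p.end_mem_support (h ▸ q.end_mem_support)
    rcases hx with rfl | rfl <;> rcases hy with rfl | rfl
    · exact absurd rfl hxy
    · exact ⟨a, b, Set.pair_eq_of_eq_or_eq_of_ne ha hb hab, p, q, hp, hq,
        (disjoint_suppSet_iff p q).2 hpq, by omega⟩
    · exact ⟨b, a, Set.pair_eq_of_eq_or_eq_of_ne hb ha hab.symm, q, p, hq, hp,
        (disjoint_suppSet_iff q p).2 hpq.symm, by omega⟩
    · exact absurd rfl hxy

/-- `G` contains two vertex-disjoint paths between `{s,t}` and `{s',t'}` (covering all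
four endpoints) of total length at least `k` iff the graph obtained by adding an apex
`u` adjacent to `s, t` and an apex `v` adjacent to `s', t'` contains a cycle of length
at least `k + 4` through both `u` and `v`. -/
theorem two_disjoint_paths_iff_apex_cycle {V : Type*} [Fintype V] (G : SimpleGraph V)
    (s t s' t' : V) (hst : s ≠ t) (hst' : s' ≠ t') (k : ℕ) :
    (∃ a b : V, ({a, b} : Set V) = {s', t'} ∧
        ∃ (p : G.Walk s a) (q : G.Walk t b), p.IsPath ∧ q.IsPath ∧
          Disjoint (suppSet p) (suppSet q) ∧ k ≤ p.length + q.length) ↔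
    (∃ (w : V ⊕ Bool) (C : (addTwoApexes G s t s' t').Walk w w), C.IsCycle ∧
        Sum.inr false ∈ C.support ∧ Sum.inr true ∈ C.support ∧ k + 4 ≤ C.length) :=
  two_disjoint_paths_iff_apex_cycle_general G s t s' t' k
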